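/- Let R be a set of atoms of Π(X) and G_R the graph on X with edges corresponding to atoms of R. If G_R is a forest with m edges, then the number of distinct partitions of X expressible as the join of some subset of R (including the empty join, the discrete partition) equals 2^m. -/

import Mathlib

variable {X : Type*} [Fintype X] [DecidableEq X]

/-- The atom of the partition lattice whose only nonsingleton block is `{x, y}`. -/
def pairSetoid (x y : X) : Setoid X where
  r a b := a = b ∨ (a = x ∧ b = y) ∨ (a = y ∧ b = x)
  iseqv := by
    refine ⟨fun a => Or.inl rfl, ?_, ?_⟩
    · intro a b h; tauto
    · intro a b c h1 h2; aesop

/-- `S` is an atomic decomposition of the partition `π`. -/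
def IsAtomicDecomp (π : Setoid X) (S : Set (Setoid X)) : Prop :=
  (∀ a ∈ S, IsAtom a) ∧ sSup S = π

/-- `S` is a minimal atomic decomposition of `π`. -/
def IsMinAtomicDecomp (π : Setoid X) (S : Set (Setoid X)) : Prop :=
  IsAtomicDecomp π S ∧ ∀ T ⊂ S, ¬ IsAtomicDecomp π T

/-- `𝔑 π`: the number of minimal atomic decompositions of `π`. -/
noncomputable def numMinDecomp (π : Setoid X) : ℕ :=
  {S | IsMinAtomicDecomp π S}.ncard

/-- The graph on `X` whose edges are the nonsingleton blocks of the atoms in `S`. -/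
def atomGraph (S : Set (Setoid X)) : SimpleGraph X where
  Adj a b := a ≠ b ∧ pairSetoid a b ∈ S
  symm := by
    constructor
    intro a b ⟨h1, h2⟩
    refine ⟨h1.symm, ?_⟩
    have h : pairSetoid b a = pairSetoid a b := by
      apply Setoid.ext; intro u v
      show _ ∨ _ ↔ _ ∨ _; tauto
    rw [h]; exact h2
  loopless := by constructor; intro a ⟨h, _⟩; exact h rfl

/-!
An atom of `Π(X)` is `pairSetoid x y` for some `x ≠ y`, i.e. an edge of `G_R`, and the join of
a set `T` of atoms relates exactly the points joined by a path of `G_T`. In a forest the only path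
between the ends of an edge is the edge itself, so for `T ⊆ R` an atom of `R` lies below `sSup T`
only if it belongs to `T`. Hence `T ↦ sSup T` is injective on the `2 ^ |R|` subsets of `R`, and
`R` is in bijection with the `m` edges of `G_R`.
-/

open SimpleGraph

theorem SimpleGraph.IsAcyclic.adj_of_reachable_of_le {V : Type*} {G H : SimpleGraph V}
    (hG : G.IsAcyclic) (hHG : H ≤ G) {x y : V} (hxy : G.Adj x y) (hreach : H.Reachable x y) :
    H.Adj x y := by
  by_contra hH
  refine isBridge_iff.mp (isAcyclic_iff_forall_adj_isBridge.mp hG hxy) (hreach.mono ?_)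
  intro u v huv
  refine deleteEdges_adj.mpr ⟨hHG huv, fun he => hH ?_⟩
  rcases Sym2.eq_iff.mp (Set.mem_singleton_iff.mp he) with ⟨rfl, rfl⟩ | ⟨rfl, rfl⟩
  · exact huv
  · exact huv.symm

instance Setoid.finite {α : Type*} [Finite α] : Finite (Setoid α) :=
  Finite.of_injective (fun s : Setoid α => ⇑s) fun s t h => by cases s; cases t; cases h; rfl

section PairSetoid

variable {α : Type*} [DecidableEq α] {x y u v : α}

theorem pairSetoid_comm (x y : α) : pairSetoid x y = pairSetoid y x :=
  Setoid.ext fun _ _ => by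
    show _ ∨ _ ↔ _ ∨ _
    tauto

theorem pairSetoid_rel_self (x y : α) : pairSetoid x y x y := Or.inr (Or.inl ⟨rfl, rfl⟩)

theorem pairSetoid_le_iff {a : Setoid α} : pairSetoid x y ≤ a ↔ a x y := by
  refine ⟨fun h => h (pairSetoid_rel_self x y), fun h => ?_⟩
  rintro u v (rfl | ⟨rfl, rfl⟩ | ⟨rfl, rfl⟩)
  · exact a.refl _
  · exact h
  · exact a.symm h

theorem pairSetoid_ne_bot (h : x ≠ y) : pairSetoid x y ≠ ⊥ := by
  intro hbot
  have hrel := pairSetoid_rel_self x y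
  rw [hbot] at hrel
  exact h hrel

theorem IsAtom.exists_eq_pairSetoid {a : Setoid α} (ha : IsAtom a) :
    ∃ x y, x ≠ y ∧ a = pairSetoid x y := by
  obtain ⟨x, y, hxy, hne⟩ : ∃ x y, a x y ∧ x ≠ y := by
    by_contra! h
    exact ha.1 (eq_bot_iff.mpr fun x y => h x y)
  exact ⟨x, y, hne, ((ha.le_iff.mp (pairSetoid_le_iff.mpr hxy)).resolve_left
    (pairSetoid_ne_bot hne)).symm⟩

theorem sym2_eq_of_pairSetoid_eq (hxy : x ≠ y) (h : pairSetoid x y = pairSetoid u v) :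
    s(x, y) = s(u, v) := by
  have hrel : pairSetoid u v x y := h ▸ pairSetoid_rel_self x y
  rcases hrel with rfl | ⟨rfl, rfl⟩ | ⟨rfl, rfl⟩
  · exact absurd rfl hxy
  · rfl
  · exact Sym2.eq_swap

end PairSetoid

section AtomGraph

variable {α : Type*} [DecidableEq α] {R T : Set (Setoid α)}

theorem atomGraph_mono (h : T ⊆ R) : atomGraph T ≤ atomGraph R :=
  fun _ _ hab => ⟨hab.1, h hab.2⟩

theorem sSup_rel_iff_reachable (hT : ∀ a ∈ T, IsAtom a) {p q : α} :
    sSup T p q ↔ (atomGraph T).Reachable p q := by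
  rw [Setoid.sSup_eq_eqvGen]
  constructor
  · intro h
    induction h with
    | rel x y hxy =>
      obtain ⟨r, hrT, hr⟩ := hxy
      obtain ⟨u, v, huv, rfl⟩ := (hT r hrT).exists_eq_pairSetoid
      rcases hr with rfl | ⟨rfl, rfl⟩ | ⟨rfl, rfl⟩
      · exact Reachable.refl _
      · exact Adj.reachable ⟨huv, hrT⟩
      · exact Adj.reachable ⟨huv.symm, by rwa [pairSetoid_comm]⟩
    | refl x => exact Reachable.refl _
    | symm x y _ ih => exact ih.symm
    | trans x y z _ _ ih₁ ih₂ => exact ih₁.trans ih₂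
  · rintro ⟨w⟩
    induction w with
    | nil => exact Relation.EqvGen.refl _
    | cons hadj _ ih =>
      exact .trans _ _ _ (.rel _ _ ⟨_, hadj.2, pairSetoid_rel_self _ _⟩) ih

theorem mem_of_le_sSup_of_isAcyclic (hR : ∀ a ∈ R, IsAtom a) (hforest : (atomGraph R).IsAcyclic)
    (hTR : T ⊆ R) {a : Setoid α} (ha : a ∈ R) (hle : a ≤ sSup T) : a ∈ T := by
  obtain ⟨x, y, hxy, rfl⟩ := (hR a ha).exists_eq_pairSetoid
  have hreach : (atomGraph T).Reachable x y :=
    (sSup_rel_iff_reachable fun b hb => hR b (hTR hb)).mp (pairSetoid_le_iff.mp hle)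
  exact (hforest.adj_of_reachable_of_le (atomGraph_mono hTR) ⟨hxy, ha⟩ hreach).2

theorem injOn_sSup_powerset_of_isAcyclic (hR : ∀ a ∈ R, IsAtom a)
    (hforest : (atomGraph R).IsAcyclic) : Set.InjOn sSup (𝒫 R) := by
  have hsub : ∀ T₁ ∈ 𝒫 R, ∀ T₂ ∈ 𝒫 R, sSup T₁ = sSup T₂ → T₁ ⊆ T₂ :=
    fun T₁ h₁ T₂ h₂ heq a ha =>
      mem_of_le_sSup_of_isAcyclic hR hforest h₂ (h₁ ha) (heq ▸ le_sSup ha)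
  exact fun T₁ h₁ T₂ h₂ heq => (hsub T₁ h₁ T₂ h₂ heq).antisymm (hsub T₂ h₂ T₁ h₁ heq.symm)

theorem ncard_edgeSet_atomGraph (hR : ∀ a ∈ R, IsAtom a) :
    (atomGraph R).edgeSet.ncard = R.ncard := by
  let pair : Sym2 α → Setoid α := Sym2.lift ⟨pairSetoid, pairSetoid_comm⟩
  have himage : pair '' (atomGraph R).edgeSet = R := by
    ext a
    constructor
    · rintro ⟨⟨x, y⟩, he, rfl⟩
      exact he.2
    · intro ha
      obtain ⟨x, y, hxy, rfl⟩ := (hR a ha).exists_eq_pairSetoid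
      exact ⟨s(x, y), ⟨hxy, ha⟩, rfl⟩
  have hinj : Set.InjOn pair (atomGraph R).edgeSet := by
    rintro ⟨x, y⟩ he ⟨u, v⟩ - heq
    exact sym2_eq_of_pairSetoid_eq he.1 heq
  rw [← hinj.ncard_image, himage]

end AtomGraph

/-- If the graph of a set `R` of atoms is a forest with `m` edges, then the
number of partitions expressible as the join of a subset of `R` equals `2^m`. -/
theorem joins_of_forest (R : Set (Setoid X)) (m : ℕ) (hR : ∀ a ∈ R, IsAtom a)
    (hforest : (atomGraph R).IsAcyclic) (hm : (atomGraph R).edgeSet.ncard = m) :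
    {π : Setoid X | ∃ T ⊆ R, sSup T = π}.ncard = 2 ^ m := by
  have hjoins : {π : Setoid X | ∃ T ⊆ R, sSup T = π} = sSup '' 𝒫 R := rfl
  rw [hjoins, (injOn_sSup_powerset_of_isAcyclic hR hforest).ncard_image,
    Set.ncard_powerset, ← hm, ncard_edgeSet_atomGraph hR]
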